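/- There exists r0>0 such that for all ε1,ε2>0 with √(ε1²+ε2²)<r0, with q_green the unique root in (0,1) of a13(q)=R, q_red the unique zero in (0,1) of μ(q)=a13(q)−P−q(T−P), and q_blue=(R−P)/(T−P): (i) if G1=0 then q_green = q_blue = q_red; (ii) if G1<0 then q_green < q_blue < q_red; (iii) if G1>0 then q_green > q_blue > q_red. -/

import Mathlib

/-!
Clearing the denominators `x(q)² (1 - ε₁ - ε₂)` turns both root equations into identities
of the form `(T - P)(q - q_blue) · p₁ = ± G₁ · p₂` with `p₁, p₂ > 0` as soon as `q ∈ (0, 1)`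
and `ε₁ + ε₂ < 1`. Hence `q_green - q_blue` and `q_blue - q_red` both have the sign of `G₁`.
-/

/-- The pay-off `a13(q)` of ATFT against the generous strategy G = r(1,q). -/
noncomputable def a13 (T R P S ε1 ε2 q : ℝ) : ℝ :=
  ((R - T) + (P - S)) * ε1 ^ 2 * (1 - q) / (q + (1 - q) * (ε1 + ε2)) ^ 2
    - (ε1 / (q + (1 - q) * (ε1 + ε2))) *
        ((2 * R - S - T + (T - R) * (ε1 + ε2)) / (1 - ε1 - ε2))
    + (R * (1 - ε2) - ε1 * S) / (1 - ε1 - ε2)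

/-- The function `μ(q) = a13(q) − P − q(T−P)`. -/
noncomputable def mu (T R P S ε1 ε2 q : ℝ) : ℝ :=
  a13 T R P S ε1 ε2 q - P - q * (T - P)

/-- The paper's `x(q)`. -/
def xq (ε1 ε2 q : ℝ) : ℝ := q + (1 - q) * (ε1 + ε2)

theorem add_le_two_mul_sqrt_sq_add_sq (a b : ℝ) : a + b ≤ 2 * √(a ^ 2 + b ^ 2) := by
  have ha : a ≤ √(a ^ 2 + b ^ 2) := Real.le_sqrt_of_sq_le (by nlinarith)
  have hb : b ≤ √(a ^ 2 + b ^ 2) := Real.le_sqrt_of_sq_le (by nlinarith)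
  linarith

theorem sign_eq_sign_of_mul_eq {a b p₁ p₂ : ℝ} (hp₁ : 0 < p₁) (hp₂ : 0 < p₂)
    (h : a * p₁ = b * p₂) : SignType.sign a = SignType.sign b := by
  simpa [sign_mul, sign_pos hp₁, sign_pos hp₂] using congrArg SignType.sign h

section Identities

variable (T R P S ε1 ε2 q : ℝ)

theorem a13_sub_mul_eq (hx : xq ε1 ε2 q ≠ 0) (hd : 1 - ε1 - ε2 ≠ 0) (hTP : T - P ≠ 0) :
    (a13 T R P S ε1 ε2 q - R) * (xq ε1 ε2 q ^ 2 * (1 - ε1 - ε2)) =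
      ε1 * ((T - P) * (q - (R - P) / (T - P)) * (xq ε1 ε2 q * (1 - ε1 - ε2))
        - ((R - T) + (P - S)) * ((1 - xq ε1 ε2 q) * (xq ε1 ε2 q - ε1))) := by
  unfold xq at *
  unfold a13
  field_simp
  ring

theorem mu_mul_eq (hx : xq ε1 ε2 q ≠ 0) (hd : 1 - ε1 - ε2 ≠ 0) (hTP : T - P ≠ 0) :
    mu T R P S ε1 ε2 q * (xq ε1 ε2 q ^ 2 * (1 - ε1 - ε2)) =
      (xq ε1 ε2 q - ε1) * ((T - P) * ((R - P) / (T - P) - q) * (xq ε1 ε2 q * (1 - ε1 - ε2))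
        - ((R - T) + (P - S)) * (ε1 * (1 - xq ε1 ε2 q))) := by
  unfold xq at *
  unfold mu a13
  field_simp
  ring

end Identities

section Roots

variable {T R P S ε1 ε2 q : ℝ}

theorem xq_pos (hs : 0 < ε1 + ε2) (hq : q ∈ Set.Ioo (0 : ℝ) 1) : 0 < xq ε1 ε2 q := by
  unfold xq
  nlinarith [hq.1, hq.2]

theorem xq_lt_one (hs : ε1 + ε2 < 1) (hq : q < 1) : xq ε1 ε2 q < 1 := by
  unfold xq
  nlinarith

theorem lt_xq (hε2 : 0 < ε2) (hs : ε1 + ε2 < 1) (hq : 0 < q) : ε1 < xq ε1 ε2 q := by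
  unfold xq
  nlinarith

theorem sign_sub_of_a13_eq (hε1 : 0 < ε1) (hε2 : 0 < ε2) (hs : ε1 + ε2 < 1)
    (hq : q ∈ Set.Ioo (0 : ℝ) 1) (hTP : 0 < T - P) (hroot : a13 T R P S ε1 ε2 q = R) :
    SignType.sign (q - (R - P) / (T - P)) = SignType.sign ((R - T) + (P - S)) := by
  have hx := xq_pos (add_pos hε1 hε2) hq
  have hd : 0 < 1 - ε1 - ε2 := by linarith
  have key := a13_sub_mul_eq T R P S ε1 ε2 q hx.ne' hd.ne' hTP.ne'
  rw [hroot, sub_self, zero_mul, eq_comm, mul_eq_zero] at key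
  refine sign_eq_sign_of_mul_eq (p₁ := (T - P) * (xq ε1 ε2 q * (1 - ε1 - ε2)))
    (by positivity) (mul_pos (sub_pos.2 (xq_lt_one hs hq.2)) (sub_pos.2 (lt_xq hε2 hs hq.1))) ?_
  rw [← sub_eq_zero.1 (key.resolve_left hε1.ne')]
  ring

theorem sign_sub_of_mu_eq_zero (hε1 : 0 < ε1) (hε2 : 0 < ε2) (hs : ε1 + ε2 < 1)
    (hq : q ∈ Set.Ioo (0 : ℝ) 1) (hTP : 0 < T - P) (hroot : mu T R P S ε1 ε2 q = 0) :
    SignType.sign ((R - P) / (T - P) - q) = SignType.sign ((R - T) + (P - S)) := by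
  have hx := xq_pos (add_pos hε1 hε2) hq
  have hd : 0 < 1 - ε1 - ε2 := by linarith
  have key := mu_mul_eq T R P S ε1 ε2 q hx.ne' hd.ne' hTP.ne'
  rw [hroot, zero_mul, eq_comm, mul_eq_zero] at key
  refine sign_eq_sign_of_mul_eq (p₁ := (T - P) * (xq ε1 ε2 q * (1 - ε1 - ε2)))
    (by positivity) (mul_pos hε1 (sub_pos.2 (xq_lt_one hs hq.2))) ?_
  rw [← sub_eq_zero.1 (key.resolve_left (sub_pos.2 (lt_xq hε2 hs hq.1)).ne')]
  ring

end Roots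

theorem trichotomy_of_sign_eq {a b g : ℝ} (ha : SignType.sign a = SignType.sign g)
    (hb : SignType.sign b = SignType.sign g) :
    (g = 0 → a = 0 ∧ b = 0) ∧ (g < 0 → a < 0 ∧ b < 0) ∧ (g > 0 → a > 0 ∧ b > 0) := by
  refine ⟨fun h => ?_, fun h => ?_, fun h => ?_⟩
  · rw [← sign_eq_zero_iff] at h
    exact ⟨sign_eq_zero_iff.1 (ha.trans h), sign_eq_zero_iff.1 (hb.trans h)⟩
  · rw [← sign_eq_neg_one_iff] at h
    exact ⟨sign_eq_neg_one_iff.1 (ha.trans h), sign_eq_neg_one_iff.1 (hb.trans h)⟩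
  · rw [gt_iff_lt, ← sign_eq_one_iff] at h
    exact ⟨sign_eq_one_iff.1 (ha.trans h), sign_eq_one_iff.1 (hb.trans h)⟩

theorem stmt_14_general (T R P S : ℝ) (hTR : T > R) (hRP : R > P) :
    ∃ r0 : ℝ, 0 < r0 ∧
      ∀ ε1 ε2 : ℝ, 0 < ε1 → 0 < ε2 → Real.sqrt (ε1 ^ 2 + ε2 ^ 2) < r0 →
        ∀ qgreen ∈ Set.Ioo (0 : ℝ) 1, a13 T R P S ε1 ε2 qgreen = R →
          ∀ qred ∈ Set.Ioo (0 : ℝ) 1, mu T R P S ε1 ε2 qred = 0 →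
            (((R - T) + (P - S) = 0) →
              qgreen = (R - P) / (T - P) ∧ (R - P) / (T - P) = qred) ∧
            (((R - T) + (P - S) < 0) →
              qgreen < (R - P) / (T - P) ∧ (R - P) / (T - P) < qred) ∧
            (((R - T) + (P - S) > 0) →
              qgreen > (R - P) / (T - P) ∧ (R - P) / (T - P) > qred) := by
  refine ⟨1 / 2, by norm_num, fun ε1 ε2 hε1 hε2 hr qg hqg hgreen qr hqr hred => ?_⟩
  have hTP : 0 < T - P := by linarith
  have hs : ε1 + ε2 < 1 := by
    linarith [add_le_two_mul_sqrt_sq_add_sq ε1 ε2]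
  obtain ⟨hzero, hneg, hpos⟩ := trichotomy_of_sign_eq
    (sign_sub_of_a13_eq hε1 hε2 hs hqg hTP hgreen) (sign_sub_of_mu_eq_zero hε1 hε2 hs hqr hTP hred)
  refine ⟨fun h => ?_, fun h => ?_, fun h => ?_⟩
  · obtain ⟨h₁, h₂⟩ := hzero h
    exact ⟨sub_eq_zero.1 h₁, sub_eq_zero.1 h₂⟩
  · obtain ⟨h₁, h₂⟩ := hneg h
    exact ⟨sub_neg.1 h₁, sub_neg.1 h₂⟩
  · obtain ⟨h₁, h₂⟩ := hpos h
    exact ⟨sub_pos.1 h₁, sub_pos.1 h₂⟩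

theorem stmt_14 (T R P S : ℝ) (hTR : T > R) (hRP : R > P) (hPS : P > S)
    (hlow : P < (S + T) / 2) (hup : (S + T) / 2 < R) :
    ∃ r0 : ℝ, 0 < r0 ∧
      ∀ ε1 ε2 : ℝ, 0 < ε1 → 0 < ε2 → Real.sqrt (ε1 ^ 2 + ε2 ^ 2) < r0 →
        ∀ qgreen ∈ Set.Ioo (0 : ℝ) 1, a13 T R P S ε1 ε2 qgreen = R →
          ∀ qred ∈ Set.Ioo (0 : ℝ) 1, mu T R P S ε1 ε2 qred = 0 →
            (((R - T) + (P - S) = 0) →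
              qgreen = (R - P) / (T - P) ∧ (R - P) / (T - P) = qred) ∧
            (((R - T) + (P - S) < 0) →
              qgreen < (R - P) / (T - P) ∧ (R - P) / (T - P) < qred) ∧
            (((R - T) + (P - S) > 0) →
              qgreen > (R - P) / (T - P) ∧ (R - P) / (T - P) > qred) :=
  stmt_14_general T R P S hTR hRP
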